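/- arXiv:1711.01156 — 2 statements merged into one kernel-verified Lean document; each statement's English description precedes it below -/
import Mathlib

section
/- Let t : Fin n → k and let D : A → A be a k-linear map satisfying the graded Leibniz rule with D(x_i) = x_i * w_t for all i ∈ Fin n. Then the subgroup of the group of k-algebra automorphisms of A consisting of those f with f(x_i) homogeneous of degree 1 for every i and f ∘ D = D ∘ f is isomorphic, as a group, to the subgroup {M ∈ GL_n(k) | ∑_{j} t j * M j s = t s for all s ∈ Fin n} of GL_n(k). -/
open MvPolynomial

/-!
A degree-one automorphism `f` of `k[x₁,…,xₙ]` is a linear substitution `xᵢ ↦ ∑ⱼ Pᵢⱼ xⱼ` with `P`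
invertible. On linear forms `D p = p * w_t`, so `f` commutes with `D` on the generators exactly
when `f (w_t) = w_t`; conversely, if `f` fixes `w_t`, the graded Leibniz rule applied to `xᵢ * p`
propagates `f ∘ D = D ∘ f` from the generators to all of `A`. Finally `f (w_t) = w_t` says
`t ᵥ* P = t`, so `M ↦ (substitution by M⁻¹)` is an isomorphism from the stabilizer of `t` onto
the group of degree-one automorphisms commuting with `D`.
-/

open Matrix

namespace MvPolynomial

variable {R σ : Type*} [CommRing R] [Fintype σ]

theorem isHomogeneous_one_iff {p : MvPolynomial σ R} :
    p.IsHomogeneous 1 ↔ ∃ c : σ → R, ∑ i, c i • X i = p := by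
  rw [← mem_homogeneousSubmodule, homogeneousSubmodule_one_eq_span_X,
    Submodule.mem_span_range_iff_exists_fun]

theorem sum_smul_X_injective [Nontrivial R] :
    Function.Injective fun c : σ → R => ∑ i, c i • (X i : MvPolynomial σ R) := by
  intro c d h
  apply (linearIndependent_X σ R).fintypeLinearCombination_injective
  simpa only [Fintype.linearCombination_apply] using h

noncomputable def linearSubst (P : Matrix σ σ R) : MvPolynomial σ R →ₐ[R] MvPolynomial σ R :=
  aeval fun i => ∑ j, P i j • X j

theorem linearSubst_X (P : Matrix σ σ R) (i : σ) : linearSubst P (X i) = ∑ j, P i j • X j :=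
  aeval_X _ i

theorem isHomogeneous_linearSubst_X (P : Matrix σ σ R) (i : σ) :
    (linearSubst P (X i)).IsHomogeneous 1 :=
  isHomogeneous_one_iff.2 ⟨_, (linearSubst_X P i).symm⟩

theorem linearSubst_sum_smul_X (P : Matrix σ σ R) (c : σ → R) :
    linearSubst P (∑ i, c i • X i) = ∑ j, (c ᵥ* P) j • X j := by
  simp only [map_sum, map_smul, linearSubst_X, Finset.smul_sum, smul_smul, vecMul, dotProduct,
    Finset.sum_smul]
  exact Finset.sum_comm

theorem linearSubst_one [DecidableEq σ] :
    linearSubst (1 : Matrix σ σ R) = AlgHom.id R (MvPolynomial σ R) :=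
  algHom_ext fun i => by simp [linearSubst_X, one_apply]

theorem linearSubst_mul (P Q : Matrix σ σ R) :
    linearSubst (P * Q) = (linearSubst Q).comp (linearSubst P) :=
  algHom_ext fun i => by
    rw [AlgHom.comp_apply, linearSubst_X, linearSubst_X, linearSubst_sum_smul_X]
    rfl

theorem linearSubst_injective [Nontrivial R] :
    Function.Injective (linearSubst : Matrix σ σ R → _) := by
  intro P Q h
  refine _root_.funext fun i => ?_
  have hi := AlgHom.congr_fun h (X i)
  rw [linearSubst_X, linearSubst_X] at hi
  exact sum_smul_X_injective hi

variable [DecidableEq σ]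

/-- Substitution by `M⁻¹`: the inverse turns the anti-homomorphism `linearSubst` into a
homomorphism. -/
noncomputable def linearSubstAut : GL σ R →* (MvPolynomial σ R ≃ₐ[R] MvPolynomial σ R) where
  toFun M := AlgEquiv.ofAlgHom (linearSubst ↑M⁻¹) (linearSubst ↑M)
    (by rw [← linearSubst_mul, ← Units.val_mul, mul_inv_cancel, Units.val_one, linearSubst_one])
    (by rw [← linearSubst_mul, ← Units.val_mul, inv_mul_cancel, Units.val_one, linearSubst_one])
  map_one' := AlgEquiv.ext fun p => by simp [linearSubst_one]
  map_mul' M N := AlgEquiv.ext fun p => by simp [linearSubst_mul]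

theorem linearSubstAut_apply (M : GL σ R) (p : MvPolynomial σ R) :
    linearSubstAut M p = linearSubst ↑M⁻¹ p :=
  rfl

theorem linearSubstAut_injective [Nontrivial R] :
    Function.Injective (linearSubstAut : GL σ R → _) := fun M N h =>
  inv_injective <| Units.ext <| linearSubst_injective <| AlgHom.ext fun p => by
    simpa only [linearSubstAut_apply] using AlgEquiv.congr_fun h p

theorem exists_linearSubstAut_eq {k : Type*} [Field k]
    (f : MvPolynomial σ k ≃ₐ[k] MvPolynomial σ k) (hf : ∀ i, (f (X i)).IsHomogeneous 1) :
    ∃ M, linearSubstAut M = f := by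
  choose P hP using fun i => isHomogeneous_one_iff.1 (hf i)
  have hfP (p : MvPolynomial σ k) : f p = linearSubst (Matrix.of P) p := by
    have h : (f : MvPolynomial σ k →ₐ[k] _) = linearSubst (Matrix.of P) :=
      algHom_ext fun i => by simp [linearSubst_X, hP]
    exact AlgHom.congr_fun h p
  have hunit : IsUnit (Matrix.of P) := vecMul_injective_iff_isUnit.1 fun c d hcd =>
    sum_smul_X_injective <| f.injective <| by
      simp only [hfP, linearSubst_sum_smul_X]
      exact congrArg (fun v : σ → k => ∑ j, v j • (X j : MvPolynomial σ k)) hcd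
  refine ⟨hunit.unit⁻¹, AlgEquiv.ext fun p => ?_⟩
  rw [linearSubstAut_apply, inv_inv, IsUnit.unit_spec, hfP]

end MvPolynomial

namespace Matrix

variable {R σ : Type*} [CommRing R] [Fintype σ] [DecidableEq σ]

def vecMulStabilizer (t : σ → R) : Subgroup (GL σ R) where
  carrier := {M | t ᵥ* ↑M = t}
  one_mem' := vecMul_one t
  mul_mem' {M N} (hM : t ᵥ* ↑M = t) (hN : t ᵥ* ↑N = t) := by
    change t ᵥ* ↑(M * N) = t
    rw [Units.val_mul, ← vecMul_vecMul, hM, hN]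
  inv_mem' {M} (hM : t ᵥ* ↑M = t) := by
    change t ᵥ* ↑M⁻¹ = t
    calc t ᵥ* ↑M⁻¹ = (t ᵥ* (M : Matrix σ σ R)) ᵥ* ((M⁻¹ : GL σ R) : Matrix σ σ R) := by rw [hM]
      _ = t := by rw [vecMul_vecMul, ← Units.val_mul, mul_inv_cancel, Units.val_one, vecMul_one]

theorem mem_vecMulStabilizer {t : σ → R} {M : GL σ R} :
    M ∈ vecMulStabilizer t ↔ t ᵥ* ↑M = t :=
  Iff.rfl

end Matrix

namespace MvPolynomial

section

variable {R σ : Type*} [CommRing R]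

def IsGradedLeibniz (D : MvPolynomial σ R →ₗ[R] MvPolynomial σ R) : Prop :=
  ∀ (d : ℕ) (a b : MvPolynomial σ R), a.IsHomogeneous d →
    D (a * b) = D a * b + ((-1 : R) ^ d) • (a * D b)

variable {D : MvPolynomial σ R →ₗ[R] MvPolynomial σ R} {t : σ → R}

theorem IsGradedLeibniz.map_C (hD : IsGradedLeibniz D) (r : R) : D (C r) = 0 := by
  have h := hD 0 1 1 (isHomogeneous_one σ R)
  simp only [mul_one, one_mul, pow_zero, one_smul, left_eq_add] at h
  rw [C_eq_smul_one, map_smul, h, smul_zero]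

variable [Fintype σ]

theorem apply_eq_mul_of_isHomogeneous_one (hX : ∀ i, D (X i) = X i * ∑ j, t j • X j)
    {p : MvPolynomial σ R} (hp : p.IsHomogeneous 1) : D p = p * ∑ j, t j • X j := by
  obtain ⟨c, rfl⟩ := isHomogeneous_one_iff.1 hp
  simp only [map_sum, map_smul, hX, Finset.sum_mul, smul_mul_assoc]

theorem IsGradedLeibniz.commute_of_map_eq (hD : IsGradedLeibniz D)
    (hX : ∀ i, D (X i) = X i * ∑ j, t j • X j) (g : MvPolynomial σ R →ₐ[R] MvPolynomial σ R)
    (hg : ∀ i, (g (X i)).IsHomogeneous 1) (hgw : g (∑ j, t j • X j) = ∑ j, t j • X j)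
    (p : MvPolynomial σ R) : g (D p) = D (g p) := by
  induction p using MvPolynomial.induction_on with
  | C r => rw [hD.map_C, map_zero, algHom_C, algebraMap_eq, hD.map_C]
  | add p q hp hq => simp only [map_add, hp, hq]
  | mul_X p i ih =>
    rw [mul_comm, map_mul g, hD 1 _ _ (isHomogeneous_X R i), hD 1 _ _ (hg i),
      apply_eq_mul_of_isHomogeneous_one hX (hg i), hX i, map_add, map_mul, map_mul, map_smul,
      map_mul, hgw, ih]

theorem map_eq_of_commute [IsDomain R] (hX : ∀ i, D (X i) = X i * ∑ j, t j • X j)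
    (g : MvPolynomial σ R →ₐ[R] MvPolynomial σ R) (hinj : Function.Injective g)
    (hg : ∀ i, (g (X i)).IsHomogeneous 1) (hgD : ∀ p, g (D p) = D (g p)) :
    g (∑ j, t j • X j) = ∑ j, t j • X j := by
  cases isEmpty_or_nonempty σ
  · simp
  · obtain ⟨i⟩ := ‹Nonempty σ›
    have h := hgD (X i)
    rw [hX, map_mul, apply_eq_mul_of_isHomogeneous_one hX (hg i)] at h
    exact mul_left_cancel₀ ((map_ne_zero_iff g hinj).2 (X_ne_zero i)) h

variable [DecidableEq σ]

theorem linearSubstAut_map_eq_iff [Nontrivial R] (M : GL σ R) :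
    linearSubstAut M (∑ j, t j • X j) = ∑ j, t j • X j ↔ M ∈ vecMulStabilizer t := by
  rw [linearSubstAut_apply, linearSubst_sum_smul_X, sum_smul_X_injective.eq_iff,
    ← Subgroup.inv_mem_iff]
  rfl

end

section

variable {k σ : Type*} [Field k] [Fintype σ] [DecidableEq σ]
  {D : MvPolynomial σ k →ₗ[k] MvPolynomial σ k} {t : σ → k}

theorem mem_map_linearSubstAut_iff (hD : IsGradedLeibniz D)
    (hX : ∀ i, D (X i) = X i * ∑ j, t j • X j) (f : MvPolynomial σ k ≃ₐ[k] MvPolynomial σ k) :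
    f ∈ (vecMulStabilizer t).map linearSubstAut ↔
      (∀ i, (f (X i)).IsHomogeneous 1) ∧ ∀ p, f (D p) = D (f p) := by
  constructor
  · rintro ⟨M, hM, rfl⟩
    have hM1 (i : σ) : (linearSubstAut M (X i)).IsHomogeneous 1 :=
      isHomogeneous_linearSubst_X _ i
    exact ⟨hM1, hD.commute_of_map_eq hX (linearSubstAut M : _ →ₐ[k] _) hM1
      ((linearSubstAut_map_eq_iff M).2 hM)⟩
  · rintro ⟨hf1, hfD⟩
    obtain ⟨M, rfl⟩ := exists_linearSubstAut_eq f hf1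
    exact ⟨M, (linearSubstAut_map_eq_iff M).1
      (map_eq_of_commute hX _ (linearSubstAut M).injective hf1 hfD), rfl⟩

end

end MvPolynomial

theorem stmt_5_general (k : Type*) [Field k] (n : ℕ) (t : Fin n → k)
    (D : MvPolynomial (Fin n) k →ₗ[k] MvPolynomial (Fin n) k)
    (hLeib : ∀ (d : ℕ) (a b : MvPolynomial (Fin n) k), a.IsHomogeneous d →
      D (a * b) = D a * b + ((-1 : k) ^ d) • (a * D b))
    (hD : ∀ i : Fin n, D (X i) = X i * ∑ j : Fin n, t j • X j) :
    ∃ (G₁ : Subgroup (MvPolynomial (Fin n) k ≃ₐ[k] MvPolynomial (Fin n) k))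
      (G₂ : Subgroup (Matrix.GeneralLinearGroup (Fin n) k)),
      (∀ f, f ∈ G₁ ↔
        ((∀ i : Fin n, (f (X i)).IsHomogeneous 1) ∧
          (∀ a : MvPolynomial (Fin n) k, f (D a) = D (f a)))) ∧
      (∀ M : Matrix.GeneralLinearGroup (Fin n) k, M ∈ G₂ ↔
        (∀ s : Fin n, ∑ j : Fin n, t j * (M : Matrix (Fin n) (Fin n) k) j s = t s)) ∧
      Nonempty (G₁ ≃* G₂) := by
  refine ⟨(vecMulStabilizer t).map linearSubstAut, vecMulStabilizer t,
    mem_map_linearSubstAut_iff hLeib hD, fun M => ?_,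
    ⟨((vecMulStabilizer t).equivMapOfInjective _ linearSubstAut_injective).symm⟩⟩
  simp only [mem_vecMulStabilizer, funext_iff, vecMul, dotProduct]

/-- The group of DG automorphisms of the DG polynomial algebra `A(t)`
(algebra automorphisms `f` with each `f (X i)` homogeneous of degree 1 commuting with the
differential `D`) is isomorphic to the subgroup
`{M ∈ GL_n(k) | ∑ j, t j * M j s = t s for all s}` of `GL_n(k)`. -/
theorem stmt_5 (k : Type*) [Field k] [CharZero k] (n : ℕ) (t : Fin n → k)
    (D : MvPolynomial (Fin n) k →ₗ[k] MvPolynomial (Fin n) k)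
    (hLeib : ∀ (d : ℕ) (a b : MvPolynomial (Fin n) k), a.IsHomogeneous d →
      D (a * b) = D a * b + ((-1 : k) ^ d) • (a * D b))
    (hD : ∀ i : Fin n, D (X i) = X i * ∑ j : Fin n, t j • X j) :
    ∃ (G₁ : Subgroup (MvPolynomial (Fin n) k ≃ₐ[k] MvPolynomial (Fin n) k))
      (G₂ : Subgroup (Matrix.GeneralLinearGroup (Fin n) k)),
      (∀ f, f ∈ G₁ ↔
        ((∀ i : Fin n, (f (X i)).IsHomogeneous 1) ∧
          (∀ a : MvPolynomial (Fin n) k, f (D a) = D (f a)))) ∧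
      (∀ M : Matrix.GeneralLinearGroup (Fin n) k, M ∈ G₂ ↔
        (∀ s : Fin n, ∑ j : Fin n, t j * (M : Matrix (Fin n) (Fin n) k) j s = t s)) ∧
      Nonempty (G₁ ≃* G₂) :=
  stmt_5_general k n t D hLeib hD
end

section
/- Assume n ≥ 1 and let D : A → A be a k-linear map satisfying the graded Leibniz rule with D(x_i) = x_1 * x_i for all i ∈ Fin n. Then for every m ≥ 1 and every f ∈ A homogeneous of degree 2m, there exists a unique polynomial h, homogeneous of degree 2m and supported on the variables x_2,…,x_n (i.e. h ∈ MvPolynomial.supported k {i : Fin n | i ≠ 0}), such that f − h = D g for some g ∈ A homogeneous of degree 2m−1. In other words, the degree-2m cohomology of A(1,0,…,0) is represented bijectively by the degree-2m homogeneous polynomials in x_2,…,x_n. -/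
/-!
The graded Leibniz rule together with `D xᵢ = x₁ xᵢ` forces `D` to act on homogeneous
polynomials of odd degree as multiplication by `x₁` and to kill those of even degree
(induction along monomials: the two terms of `D (p xᵢ)` cancel exactly when `deg p` is odd).
So the coboundaries of degree `2m` are the multiples `x₁ q` with `q` homogeneous of degree
`2m - 1`, and `h` is the part of `f` free of `x₁`, i.e. its remainder modulo `x₁`.
-/

open MvPolynomial

namespace MvPolynomial

variable {σ R : Type*}

section Division

variable [CommSemiring R]

theorem IsHomogeneous.modMonomial {f : MvPolynomial σ R} {n : ℕ} (hf : f.IsHomogeneous n)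
    (s : σ →₀ ℕ) : (f.modMonomial s).IsHomogeneous n := by
  intro d hd
  by_cases hs : s ≤ d
  · simp [coeff_modMonomial_of_le _ hs] at hd
  · exact hf (by rwa [coeff_modMonomial_of_not_le _ hs] at hd)

theorem IsHomogeneous.divMonomial {f : MvPolynomial σ R} {n : ℕ} (hf : f.IsHomogeneous n)
    (s : σ →₀ ℕ) : (f.divMonomial s).IsHomogeneous (n - s.degree) := by
  intro d hd
  have := hf (by rwa [coeff_divMonomial] at hd)
  rw [map_add] at this
  rw [Finsupp.degree_eq_weight_one, ← Pi.one_def]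
  omega

theorem modMonomial_single_mem_supported (f : MvPolynomial σ R) (i : σ) :
    f.modMonomial (Finsupp.single i 1) ∈ supported R {j | j ≠ i} := by
  classical
  rw [mem_supported]
  intro j hj rfl
  obtain ⟨d, hd, hjd⟩ := (mem_vars_iff_mem_support j).1 hj
  refine mem_support_iff.1 hd (coeff_modMonomial_of_le _ ?_)
  simpa [Nat.one_le_iff_ne_zero] using hjd

theorem modMonomial_single_eq_self_of_mem_supported {p : MvPolynomial σ R} {i : σ}
    (hp : p ∈ supported R {j | j ≠ i}) : p.modMonomial (Finsupp.single i 1) = p := by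
  classical
  ext d
  by_cases hd : Finsupp.single i 1 ≤ d
  · rw [coeff_modMonomial_of_le _ hd, eq_comm]
    by_contra h
    have : i ∈ p.vars := (mem_vars_iff_mem_support i).2 ⟨d, mem_support_iff.2 h, by
      simpa [Nat.one_le_iff_ne_zero] using hd⟩
    exact mem_supported.1 hp this rfl
  · exact coeff_modMonomial_of_not_le _ hd

theorem eq_zero_of_X_dvd_of_mem_supported {p : MvPolynomial σ R} {i : σ}
    (hp : p ∈ supported R {j | j ≠ i}) (hdvd : X i ∣ p) : p = 0 := by
  rw [← modMonomial_single_eq_self_of_mem_supported hp]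
  exact X_dvd_iff_modMonomial_eq_zero.1 hdvd

end Division

def IsGradedDerivation [CommRing R] (D : MvPolynomial σ R →ₗ[R] MvPolynomial σ R) : Prop :=
  ∀ (d : ℕ) (a b : MvPolynomial σ R), a.IsHomogeneous d →
    D (a * b) = D a * b + ((-1 : R) ^ d) • (a * D b)

namespace IsGradedDerivation

variable [CommRing R] {D : MvPolynomial σ R →ₗ[R] MvPolynomial σ R}

theorem map_one (hD : IsGradedDerivation D) : D 1 = 0 := by
  simpa using hD 0 1 1 (isHomogeneous_one σ R)

variable {c : MvPolynomial σ R}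

theorem apply_monomial (hD : IsGradedDerivation D) (hX : ∀ i, D (X i) = c * X i)
    (s : σ →₀ ℕ) (r : R) :
    D (monomial s r) = if Odd s.degree then c * monomial s r else 0 := by
  obtain ⟨d, hd, hDd⟩ : ∃ d, (monomial s r).IsHomogeneous d ∧
      D (monomial s r) = if Odd d then c * monomial s r else 0 := by
    refine induction_on_monomial (motive := fun p => ∃ d, p.IsHomogeneous d ∧
      D p = if Odd d then c * p else 0) (fun a => ?_) (fun p i ⟨d, hp, hDp⟩ => ?_) s r
    · refine ⟨0, isHomogeneous_C σ a, ?_⟩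
      rw [C_eq_smul_one, map_smul, hD.map_one]
      simp
    · refine ⟨d + 1, hp.mul (isHomogeneous_X R i), ?_⟩
      rw [hD d p (X i) hp, hDp, hX]
      rcases Nat.even_or_odd d with he | ho
      · simp [he.neg_one_pow, he.add_one, Nat.not_odd_iff_even.2 he]
        ring
      · simp [ho.neg_one_pow, Nat.not_odd_iff_even.2 ho.add_one, ho]
        ring
  rcases eq_or_ne r 0 with rfl | hr
  · simp
  obtain rfl := hd.inj_right (isHomogeneous_monomial r rfl) (monomial_eq_zero.not.2 hr)
  exact hDd

theorem apply_of_isHomogeneous (hD : IsGradedDerivation D) (hX : ∀ i, D (X i) = c * X i)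
    {f : MvPolynomial σ R} {d : ℕ} (hf : f.IsHomogeneous d) :
    D f = if Odd d then c * f else 0 := by
  conv_lhs => rw [← support_sum_monomial_coeff f]
  rw [map_sum]
  have hdeg : ∀ s ∈ f.support, s.degree = d := fun s hs => by
    rw [Finsupp.degree_eq_weight_one, ← Pi.one_def]
    exact hf (mem_support_iff.1 hs)
  rw [Finset.sum_congr rfl fun s hs => by rw [hD.apply_monomial hX, hdeg s hs]]
  split_ifs
  · rw [← Finset.mul_sum, support_sum_monomial_coeff]
  · simp

end IsGradedDerivation

end MvPolynomial

theorem stmt_9_general (k : Type*) [Field k] (n : ℕ) (hn : 1 ≤ n)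
    (D : MvPolynomial (Fin n) k →ₗ[k] MvPolynomial (Fin n) k)
    (hLeib : ∀ (d : ℕ) (a b : MvPolynomial (Fin n) k), a.IsHomogeneous d →
      D (a * b) = D a * b + ((-1 : k) ^ d) • (a * D b))
    (hD : ∀ i : Fin n, D (X i) = X ⟨0, hn⟩ * X i) :
    ∀ m : ℕ, 1 ≤ m → ∀ f : MvPolynomial (Fin n) k, f.IsHomogeneous (2 * m) →
      ∃! h : MvPolynomial (Fin n) k,
        (h.IsHomogeneous (2 * m) ∧ h ∈ MvPolynomial.supported k {i : Fin n | i ≠ ⟨0, hn⟩}) ∧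
        ∃ g : MvPolynomial (Fin n) k, g.IsHomogeneous (2 * m - 1) ∧ f - h = D g := by
  intro m hm f hf
  set x₁ : Fin n := ⟨0, hn⟩
  have hDodd : ∀ g : MvPolynomial (Fin n) k, g.IsHomogeneous (2 * m - 1) → D g = X x₁ * g :=
    fun g hg => by rw [IsGradedDerivation.apply_of_isHomogeneous hLeib hD hg,
      if_pos ⟨m - 1, by omega⟩]
  have hfq := modMonomial_add_divMonomial_single f x₁
  have hr := modMonomial_single_mem_supported f x₁
  have hq := hf.divMonomial (Finsupp.single x₁ 1)
  set q := f.divMonomial (Finsupp.single x₁ 1)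
  rw [Finsupp.degree_single] at hq
  refine ⟨_, ⟨⟨hf.modMonomial _, hr⟩, q, hq, ?_⟩, ?_⟩
  · rw [hDodd q hq]
    linear_combination -hfq
  rintro h ⟨⟨-, hh⟩, g, hg, hfg⟩
  rw [hDodd g hg] at hfg
  rw [← sub_eq_zero]
  exact eq_zero_of_X_dvd_of_mem_supported (Subalgebra.sub_mem _ hh hr)
    ⟨q - g, by linear_combination -hfq - hfg⟩

/-- For the DG polynomial algebra `A(1,0,…,0)`, `m ≥ 1` and `f` homogeneous of
degree `2m`, there is a unique polynomial `h`, homogeneous of degree `2m` and supported on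
the variables `x_2,…,x_n`, such that `f - h = D g` for some `g` homogeneous of degree
`2m - 1`. -/
theorem stmt_9 (k : Type*) [Field k] [CharZero k] (n : ℕ) (hn : 1 ≤ n)
    (D : MvPolynomial (Fin n) k →ₗ[k] MvPolynomial (Fin n) k)
    (hLeib : ∀ (d : ℕ) (a b : MvPolynomial (Fin n) k), a.IsHomogeneous d →
      D (a * b) = D a * b + ((-1 : k) ^ d) • (a * D b))
    (hD : ∀ i : Fin n, D (X i) = X ⟨0, hn⟩ * X i) :
    ∀ m : ℕ, 1 ≤ m → ∀ f : MvPolynomial (Fin n) k, f.IsHomogeneous (2 * m) →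
      ∃! h : MvPolynomial (Fin n) k,
        (h.IsHomogeneous (2 * m) ∧ h ∈ MvPolynomial.supported k {i : Fin n | i ≠ ⟨0, hn⟩}) ∧
        ∃ g : MvPolynomial (Fin n) k, g.IsHomogeneous (2 * m - 1) ∧ f - h = D g :=
  stmt_9_general k n hn D hLeib hD
end
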